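/- Let ρ be an n-qubit density matrix and let Λ_ρ be the reset channel Λ_ρ(A) = Tr(A) · ρ. Then D(Λ_ρ) = 2^n · D(ρ); consequently D(Λ_ρ) > 1 unless ρ is the maximally mixed state I/2^n, so reset channels are generally not simulable by Schrödinger propagation. -/

import Mathlib

open Matrix BigOperators Kronecker ComplexOrder

noncomputable section

/-- The four single-qubit Pauli matrices `I, X, Y, Z`. -/
def pauli1 : Fin 4 → Matrix (Fin 2) (Fin 2) ℂ :=
  ![(1 : Matrix (Fin 2) (Fin 2) ℂ),
    !![0, 1; 1, 0],
    !![0, -Complex.I; Complex.I, 0],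
    !![1, 0; 0, -1]]

/-- The `n`-qubit Pauli matrix `σ_{s 0} ⊗ ⋯ ⊗ σ_{s (n-1)}`, as a matrix on `Fin n → Fin 2`. -/
def nPauli (n : ℕ) (s : Fin n → Fin 4) :
    Matrix (Fin n → Fin 2) (Fin n → Fin 2) ℂ :=
  Matrix.of fun x y => ∏ k : Fin n, pauli1 (s k) (x k) (y k)

/-- The stabilizer norm `D(A) = 2^{-n} Σ_{σ ∈ P_n} |Tr(σ A)|`. -/
def stabNorm {n : ℕ} (A : Matrix (Fin n → Fin 2) (Fin n → Fin 2) ℂ) : ℝ :=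
  ((2 : ℝ) ^ n)⁻¹ * ∑ s : Fin n → Fin 4, ‖(nPauli n s * A).trace‖

/-- The channel stabilizer norm `D(Λ) = max_{σ ∈ P_n} D(Λ(σ))`. -/
def chanNorm {n m : ℕ}
    (Λ : Matrix (Fin n → Fin 2) (Fin n → Fin 2) ℂ →ₗ[ℂ]
         Matrix (Fin m → Fin 2) (Fin m → Fin 2) ℂ) : ℝ :=
  ⨆ s : Fin n → Fin 4, stabNorm (Λ (nPauli n s))

/-! The Pauli matrices are an orthogonal basis, `∑ₛ Tr(σₛ A) σₛ = 2ⁿ A`, and `Tr σₛ` vanishes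
except for `σ₀ = I`. So the reset channel kills every non-identity Pauli and sends `I` to `2ⁿ ρ`,
giving `D(Λ_ρ) = 2ⁿ D(ρ) = ∑ₛ |Tr(σₛ ρ)|`. The identity term of this sum is `Tr ρ = 1`, and the
remaining terms all vanish only if `ρ` is a multiple of `I`, by the Pauli expansion. -/

lemma trace_pauli1 (i : Fin 4) : (pauli1 i).trace = if i = 0 then 2 else 0 := by
  fin_cases i <;> simp [pauli1, Matrix.trace, Fin.sum_univ_two]

lemma sum_pauli1_apply_mul_apply (a b x y : Fin 2) :
    ∑ i, pauli1 i a b * pauli1 i x y = if a = y ∧ b = x then 2 else 0 := by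
  fin_cases a <;> fin_cases b <;> fin_cases x <;> fin_cases y <;>
    simp [pauli1, Fin.sum_univ_four] <;> norm_num

lemma nPauli_zero (n : ℕ) : nPauli n 0 = 1 := by
  ext x y
  simp [nPauli, pauli1, Matrix.one_apply, Fintype.prod_boole, funext_iff]

lemma trace_nPauli (n : ℕ) (s : Fin n → Fin 4) :
    (nPauli n s).trace = if s = 0 then 2 ^ n else 0 := by
  calc (nPauli n s).trace = ∏ k, (pauli1 (s k)).trace := by
        simp only [Matrix.trace, Matrix.diag, Fintype.prod_sum]; rfl
    _ = if s = 0 then 2 ^ n else 0 := by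
        simp only [trace_pauli1, Fintype.prod_ite_zero, funext_iff]; simp

lemma sum_nPauli_apply_mul_apply (n : ℕ) (a b x y : Fin n → Fin 2) :
    ∑ s, nPauli n s a b * nPauli n s x y = if a = y ∧ b = x then 2 ^ n else 0 := by
  calc ∑ s, nPauli n s a b * nPauli n s x y
        = ∏ k, ∑ i, pauli1 i (a k) (b k) * pauli1 i (x k) (y k) := by
        simp only [nPauli, Matrix.of_apply, Fintype.prod_sum, Finset.prod_mul_distrib]
    _ = if a = y ∧ b = x then 2 ^ n else 0 := by
        simp only [sum_pauli1_apply_mul_apply, Fintype.prod_ite_zero, funext_iff]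
        simp [forall_and]

lemma sum_trace_nPauli_mul_smul_nPauli (n : ℕ) (A : Matrix (Fin n → Fin 2) (Fin n → Fin 2) ℂ) :
    ∑ s, (nPauli n s * A).trace • nPauli n s = (2 : ℂ) ^ n • A := by
  ext a b
  calc (∑ s, (nPauli n s * A).trace • nPauli n s) a b
      = ∑ x, ∑ y, (∑ s, nPauli n s a b * nPauli n s x y) * A y x := by
        simp only [Matrix.sum_apply, Matrix.smul_apply, smul_eq_mul, Matrix.trace, Matrix.diag,
          Matrix.mul_apply, Finset.sum_mul]
        rw [Finset.sum_comm]
        refine Finset.sum_congr rfl fun x _ => ?_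
        rw [Finset.sum_comm]
        exact Finset.sum_congr rfl fun y _ => Finset.sum_congr rfl fun s _ => by ring
    _ = ((2 : ℂ) ^ n • A) a b := by
        simp [sum_nPauli_apply_mul_apply, ite_and]

lemma eq_of_trace_nPauli_mul_eq {n : ℕ} {A B : Matrix (Fin n → Fin 2) (Fin n → Fin 2) ℂ}
    (h : ∀ s, (nPauli n s * A).trace = (nPauli n s * B).trace) : A = B := by
  have h2 : (2 : ℂ) ^ n ≠ 0 := by positivity
  apply smul_right_injective _ h2
  simp only [← sum_trace_nPauli_mul_smul_nPauli, h]

lemma stabNorm_nonneg {n : ℕ} (A : Matrix (Fin n → Fin 2) (Fin n → Fin 2) ℂ) :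
    0 ≤ stabNorm A := by
  unfold stabNorm
  positivity

lemma stabNorm_smul {n : ℕ} (c : ℂ) (A : Matrix (Fin n → Fin 2) (Fin n → Fin 2) ℂ) :
    stabNorm (c • A) = ‖c‖ * stabNorm A := by
  simp only [stabNorm, Matrix.mul_smul, Matrix.trace_smul, smul_eq_mul, norm_mul,
    ← Finset.mul_sum]
  ring

lemma two_pow_mul_stabNorm {n : ℕ} (A : Matrix (Fin n → Fin 2) (Fin n → Fin 2) ℂ) :
    2 ^ n * stabNorm A = ∑ s, ‖(nPauli n s * A).trace‖ := by
  rw [stabNorm, mul_inv_cancel_left₀ (by positivity)]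

lemma eq_trace_div_smul_one_of_trace_nPauli_mul_eq_zero {n : ℕ}
    {A : Matrix (Fin n → Fin 2) (Fin n → Fin 2) ℂ}
    (h : ∀ s ≠ 0, (nPauli n s * A).trace = 0) : A = (A.trace / 2 ^ n) • 1 := by
  refine eq_of_trace_nPauli_mul_eq fun s => ?_
  rw [Matrix.mul_smul, Matrix.mul_one, Matrix.trace_smul, trace_nPauli, smul_eq_mul]
  split_ifs with hs
  · rw [hs, nPauli_zero, Matrix.one_mul, div_mul_cancel₀ _ (by positivity)]
  · rw [h s hs, mul_zero]

lemma norm_trace_lt_two_pow_mul_stabNorm {n : ℕ} {A : Matrix (Fin n → Fin 2) (Fin n → Fin 2) ℂ}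
    (hA : A ≠ (A.trace / 2 ^ n) • 1) : ‖A.trace‖ < 2 ^ n * stabNorm A := by
  obtain ⟨s, hs, hs_trace⟩ : ∃ s ≠ 0, (nPauli n s * A).trace ≠ 0 := by
    by_contra! h
    exact hA (eq_trace_div_smul_one_of_trace_nPauli_mul_eq_zero h)
  have hpos : 0 < ∑ s ∈ Finset.univ.erase 0, ‖(nPauli n s * A).trace‖ :=
    Finset.sum_pos' (fun _ _ => norm_nonneg _)
      ⟨s, Finset.mem_erase.2 ⟨hs, Finset.mem_univ s⟩, norm_pos_iff.2 hs_trace⟩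
  rw [two_pow_mul_stabNorm, ← Finset.add_sum_erase _ _ (Finset.mem_univ 0), nPauli_zero,
    Matrix.one_mul]
  linarith

lemma chanNorm_of_apply_eq_trace_smul {n m : ℕ}
    {Λ : Matrix (Fin n → Fin 2) (Fin n → Fin 2) ℂ →ₗ[ℂ] Matrix (Fin m → Fin 2) (Fin m → Fin 2) ℂ}
    {ρ : Matrix (Fin m → Fin 2) (Fin m → Fin 2) ℂ} (hΛ : ∀ A, Λ A = A.trace • ρ) :
    chanNorm Λ = 2 ^ n * stabNorm ρ := by
  have hval (s : Fin n → Fin 4) :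
      stabNorm (Λ (nPauli n s)) = if s = 0 then 2 ^ n * stabNorm ρ else 0 := by
    rw [hΛ, stabNorm_smul, trace_nPauli]
    split_ifs <;> simp
  simp only [chanNorm, hval]
  refine le_antisymm (ciSup_le fun s => ?_) ?_
  · split_ifs
    · rfl
    · exact mul_nonneg (by positivity) (stabNorm_nonneg ρ)
  · exact le_ciSup_of_le (Set.finite_range _).bddAbove 0 (by simp)

theorem chanNorm_reset_general (n : ℕ)
    (ρ : Matrix (Fin n → Fin 2) (Fin n → Fin 2) ℂ)
    (htr : ρ.trace = 1)
    (Λ : Matrix (Fin n → Fin 2) (Fin n → Fin 2) ℂ →ₗ[ℂ]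
         Matrix (Fin n → Fin 2) (Fin n → Fin 2) ℂ)
    (hΛ : ∀ A : Matrix (Fin n → Fin 2) (Fin n → Fin 2) ℂ, Λ A = A.trace • ρ) :
    chanNorm Λ = (2 : ℝ) ^ n * stabNorm ρ ∧
    (ρ ≠ ((2 : ℂ) ^ n)⁻¹ • (1 : Matrix (Fin n → Fin 2) (Fin n → Fin 2) ℂ) →
      1 < chanNorm Λ) := by
  have hchan := chanNorm_of_apply_eq_trace_smul hΛ
  refine ⟨hchan, fun hρ => ?_⟩
  rw [hchan, ← norm_one (α := ℂ), ← htr]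
  exact norm_trace_lt_two_pow_mul_stabNorm (by rwa [htr, one_div])

/-- For a reset channel `Λ_ρ(A) = Tr(A) ρ` with `ρ` a density matrix,
`D(Λ_ρ) = 2^n · D(ρ)`; consequently `D(Λ_ρ) > 1` unless `ρ = I/2^n`. -/
theorem chanNorm_reset (n : ℕ) (hn : 1 ≤ n)
    (ρ : Matrix (Fin n → Fin 2) (Fin n → Fin 2) ℂ)
    (hpsd : ρ.PosSemidef) (htr : ρ.trace = 1)
    (Λ : Matrix (Fin n → Fin 2) (Fin n → Fin 2) ℂ →ₗ[ℂ]
         Matrix (Fin n → Fin 2) (Fin n → Fin 2) ℂ)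
    (hΛ : ∀ A : Matrix (Fin n → Fin 2) (Fin n → Fin 2) ℂ, Λ A = A.trace • ρ) :
    chanNorm Λ = (2 : ℝ) ^ n * stabNorm ρ ∧
    (ρ ≠ ((2 : ℂ) ^ n)⁻¹ • (1 : Matrix (Fin n → Fin 2) (Fin n → Fin 2) ℂ) →
      1 < chanNorm Λ) :=
  chanNorm_reset_general n ρ htr Λ hΛ
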